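/- Let U and Ũ be n-qubit unitaries, let k ≥ 0 be an integer and δ, ε ≥ 0 be reals such that 2^{-n}·‖U − Ũ‖_F² ≤ δ² and W^{>k}[Φ_{Ũ}] ≤ ε². Then W^{>k}[Φ_U] ≤ (ε + 4√2 · δ)². -/

import Mathlib

open scoped BigOperators ComplexOrder

noncomputable section

/-- The four 1-qubit Pauli matrices, indexed by `Fin 4` (`0 = I`, `1 = X`, `2 = Y`, `3 = Z`). -/
def pauliMat (q : Fin 4) : Matrix Bool Bool ℂ := fun b b' =>
  if q = 0 then (if b = b' then 1 else 0)
  else if q = 1 then (if b = b' then 0 else 1)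
  else if q = 2 then
    (if b then (if b' then 0 else Complex.I) else (if b' then -Complex.I else 0))
  else (if b = b' then (if b then -1 else 1) else 0)

/-- An `m`-qubit Pauli tensor `P = P_1 ⊗ … ⊗ P_m`. -/
def pauliTensor {m : ℕ} (p : Fin m → Fin 4) :
    Matrix (Fin m → Bool) (Fin m → Bool) ℂ :=
  Matrix.of fun x y => ∏ i, pauliMat (p i) (x i) (y i)

/-- The degree `|P|` of a Pauli: the number of non-identity tensor factors. -/
def pauliDeg {m : ℕ} (p : Fin m → Fin 4) : ℕ :=
  (Finset.univ.filter fun i => p i ≠ 0).card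

/-- The Pauli coefficient `Â(P) = 2^{-m} · tr(P·A)`. -/
def pauliCoeff {m : ℕ} (A : Matrix (Fin m → Bool) (Fin m → Bool) ℂ)
    (p : Fin m → Fin 4) : ℂ :=
  ((2 : ℂ) ^ m)⁻¹ * (pauliTensor p * A).trace

/-- The Pauli weight of `A` above degree `k`: `W^{>k}[A] = Σ_{|P|>k} |Â(P)|²`. -/
def weightAbove {m : ℕ} (k : ℕ) (A : Matrix (Fin m → Bool) (Fin m → Bool) ℂ) : ℝ :=
  ∑ p : Fin m → Fin 4,
    if k < pauliDeg p then ‖pauliCoeff A p‖ ^ 2 else 0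

/-- The Pauli weight of `A` at degree exactly `k`. -/
def weightEq {m : ℕ} (k : ℕ) (A : Matrix (Fin m → Bool) (Fin m → Bool) ℂ) : ℝ :=
  ∑ p : Fin m → Fin 4,
    if pauliDeg p = k then ‖pauliCoeff A p‖ ^ 2 else 0

/-- The squared Frobenius norm `‖A‖_F² = tr(A†A) = Σ |A x y|²`. -/
def frobSq {α : Type*} [Fintype α] (A : Matrix α α ℂ) : ℝ :=
  ∑ x, ∑ y, ‖A x y‖ ^ 2

/-- A matrix is unitary. -/
def IsUnitaryM {α : Type*} [Fintype α] [DecidableEq α] (U : Matrix α α ℂ) : Prop :=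
  U * U.conjTranspose = 1 ∧ U.conjTranspose * U = 1

/-- Trace out all qubits except the last one of an `m`-qubit matrix. -/
def chanLast : {m : ℕ} → Matrix (Fin m → Bool) (Fin m → Bool) ℂ → Matrix Bool Bool ℂ
  | 0, _ => 0
  | _ + 1, M => Matrix.of fun b b' =>
      ∑ z, M (Fin.snoc z b) (Fin.snoc z b')

/-- The Choi representation of a map from `n`-qubit matrices to `1`-qubit matrices:
`Φ_ℰ((x,b),(x',b')) = ℰ(|x⟩⟨x'|)(b,b')`. -/
def choiOfChannel {n : ℕ}
    (E : Matrix (Fin n → Bool) (Fin n → Bool) ℂ → Matrix Bool Bool ℂ) :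
    Matrix (Fin (n + 1) → Bool) (Fin (n + 1) → Bool) ℂ :=
  Matrix.of fun w w' =>
    E (Matrix.single (fun i : Fin n => w i.castSucc)
        (fun i : Fin n => w' i.castSucc) 1)
      (w (Fin.last n)) (w' (Fin.last n))

/-- The tensor product `ρ ⊗ ψ` of an `n`-qubit matrix and an `a`-qubit matrix. -/
def tensorNA {n a : ℕ} (ρ : Matrix (Fin n → Bool) (Fin n → Bool) ℂ)
    (ψ : Matrix (Fin a → Bool) (Fin a → Bool) ℂ) :
    Matrix (Fin (n + a) → Bool) (Fin (n + a) → Bool) ℂ :=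
  Matrix.of fun x y =>
    ρ (fun i => x (Fin.castAdd a i)) (fun i => y (Fin.castAdd a i)) *
      ψ (fun j => x (Fin.natAdd n j)) (fun j => y (Fin.natAdd n j))

/-- The channel `ℰ_U : ρ ↦ tr_{all but last qubit}(UρU†)`. -/
def chanU {m : ℕ} (U : Matrix (Fin m → Bool) (Fin m → Bool) ℂ)
    (ρ : Matrix (Fin m → Bool) (Fin m → Bool) ℂ) : Matrix Bool Bool ℂ :=
  chanLast (U * ρ * U.conjTranspose)

/-- The Choi representation `Φ_U` of `ℰ_U`. -/
def choiU {n : ℕ} (U : Matrix (Fin n → Bool) (Fin n → Bool) ℂ) :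
    Matrix (Fin (n + 1) → Bool) (Fin (n + 1) → Bool) ℂ :=
  choiOfChannel (chanU U)

/-- The channel `ℰ_{C,ψ} : ρ ↦ tr_{all but last qubit}(C(ρ⊗ψ)C†)`. -/
def chanAux {n a : ℕ} (C : Matrix (Fin (n + a) → Bool) (Fin (n + a) → Bool) ℂ)
    (ψ : Matrix (Fin a → Bool) (Fin a → Bool) ℂ)
    (ρ : Matrix (Fin n → Bool) (Fin n → Bool) ℂ) : Matrix Bool Bool ℂ :=
  chanLast (C * tensorNA ρ ψ * C.conjTranspose)

/-- The Choi representation `Φ_{C,ψ}` of `ℰ_{C,ψ}`. -/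
def choiAux {n a : ℕ} (C : Matrix (Fin (n + a) → Bool) (Fin (n + a) → Bool) ℂ)
    (ψ : Matrix (Fin a → Bool) (Fin a → Bool) ℂ) :
    Matrix (Fin (n + 1) → Bool) (Fin (n + 1) → Bool) ℂ :=
  choiOfChannel (chanAux C ψ)

/-- The CZ gate on a subset `S` of the qubits. -/
def czGate {n : ℕ} (S : Finset (Fin n)) :
    Matrix (Fin n → Bool) (Fin n → Bool) ℂ :=
  Matrix.of fun x y =>
    if x = y then (if ∀ i ∈ S, x i = true then -1 else 1) else 0

/-- A layer of CZ gates on a family `G` of (disjoint) subsets of the qubits. -/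
def czLayer {n : ℕ} (G : Finset (Finset (Fin n))) :
    Matrix (Fin n → Bool) (Fin n → Bool) ℂ :=
  Matrix.of fun x y =>
    if x = y then ∏ S ∈ G, (if ∀ i ∈ S, x i = true then (-1 : ℂ) else 1) else 0

/-- A layer of single-qubit gates. -/
def IsLayer {n : ℕ} (L : Matrix (Fin n → Bool) (Fin n → Bool) ℂ) : Prop :=
  ∃ u : Fin n → Matrix Bool Bool ℂ,
    (∀ i, IsUnitaryM (u i)) ∧ ∀ x y, L x y = ∏ i, u i (x i) (y i)

/-- A depth-`d` QAC circuit on `n` qubits: `C = L_0 · M_1 · L_1 ⋯ M_d · L_d` where each `L_i`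
is a layer of single-qubit gates and each `M_j` is a product of CZ gates on pairwise
disjoint nonempty subsets of the qubits. -/
structure QACCircuit (n d : ℕ) where
  L : Fin (d + 1) → Matrix (Fin n → Bool) (Fin n → Bool) ℂ
  G : Fin d → Finset (Finset (Fin n))
  layers : ∀ i, IsLayer (L i)
  gates_nonempty : ∀ j, ∀ S ∈ G j, S.Nonempty
  gates_disjoint : ∀ j, ∀ S ∈ G j, ∀ T ∈ G j, S ≠ T → Disjoint S T

/-- The size of a QAC circuit: the number of CZ gates acting on at least 2 qubits. -/
def QACCircuit.size {n d : ℕ} (c : QACCircuit n d) : ℕ :=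
  ∑ j, ((c.G j).filter fun S => 2 ≤ S.card).card

/-- The unitary implemented by a QAC circuit. -/
def QACCircuit.matrix {n d : ℕ} (c : QACCircuit n d) :
    Matrix (Fin n → Bool) (Fin n → Bool) ℂ :=
  c.L 0 * (List.ofFn fun j : Fin d => czLayer (c.G j) * c.L j.succ).prod

/-- The Fourier coefficient `f̂(S)` of a Boolean function `f : {0,1}^n → {0,1}`. -/
def boolFourierCoeff {n : ℕ} (f : (Fin n → Bool) → Bool) (S : Finset (Fin n)) : ℝ :=
  ((2 : ℝ) ^ n)⁻¹ *
    ∑ x : Fin n → Bool,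
      (if f x then (-1 : ℝ) else 1) * ∏ i ∈ S, (if x i then (-1 : ℝ) else 1)

/-- The Fourier weight of a Boolean function above degree `k`. -/
def fweightAbove {n : ℕ} (k : ℕ) (f : (Fin n → Bool) → Bool) : ℝ :=
  ∑ S : Finset (Fin n), if k < S.card then (boolFourierCoeff f S) ^ 2 else 0

set_option maxHeartbeats 1000000 in
private lemma pauli_orth1' (a b a' b' : Bool) :
    ∑ q : Fin 4, pauliMat q a b * (starRingEnd ℂ) (pauliMat q a' b') =
      if a = a' ∧ b = b' then 2 else 0 := by
  cases a <;> cases b <;> cases a' <;> cases b' <;>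
    simp [pauliMat, Fin.sum_univ_four, Complex.conj_I] <;> norm_num

set_option maxHeartbeats 1000000 in
private lemma pauli_orth' {m : ℕ} (x y x' y' : Fin m → Bool) :
    ∑ p : Fin m → Fin 4, pauliTensor p x y * (starRingEnd ℂ) (pauliTensor p x' y') =
      if x = x' ∧ y = y' then (2:ℂ)^m else 0 := by
  have h : ∀ p : Fin m → Fin 4, pauliTensor p x y * (starRingEnd ℂ) (pauliTensor p x' y')
      = ∏ i, (pauliMat (p i) (x i) (y i) * (starRingEnd ℂ) (pauliMat (p i) (x' i) (y' i))) := by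
    intro p
    simp [pauliTensor, map_prod, Finset.prod_mul_distrib]
  simp_rw [h]
  rw [← Fintype.piFinset_univ,
    ← Finset.prod_univ_sum (fun _ : Fin m => (Finset.univ : Finset (Fin 4)))
      (fun i q => pauliMat q (x i) (y i) * (starRingEnd ℂ) (pauliMat q (x' i) (y' i)))]
  simp_rw [pauli_orth1']
  by_cases hxy : x = x' ∧ y = y'
  · obtain ⟨h1, h2⟩ := hxy
    subst h1; subst h2
    simp
  · rw [if_neg hxy]
    have : ∃ i, ¬ (x i = x' i ∧ y i = y' i) := by
      by_contra hc
      push_neg at hc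
      exact hxy ⟨funext fun i => (hc i).1, funext fun i => (hc i).2⟩
    obtain ⟨i, hi⟩ := this
    exact Finset.prod_eq_zero (Finset.mem_univ i) (by simp [if_neg hi])

private lemma sum_swap4' {α β γ δ : Type*} [Fintype α] [Fintype β] [Fintype γ] [Fintype δ]
    (f : α → β → γ → δ → ℂ) :
    ∑ a, ∑ b, ∑ c, ∑ d, f a b c d = ∑ c, ∑ d, ∑ a, ∑ b, f a b c d := by
  have h : ∀ a, ∑ b, ∑ c, ∑ d, f a b c d = ∑ c, ∑ d, ∑ b, f a b c d := by
    intro a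
    rw [Finset.sum_comm]
    exact Finset.sum_congr rfl fun c _ => Finset.sum_comm
  simp_rw [h]
  rw [Finset.sum_comm]
  exact Finset.sum_congr rfl fun c _ => Finset.sum_comm

set_option maxHeartbeats 1600000 in
private lemma parseval' {m : ℕ} (A : Matrix (Fin m → Bool) (Fin m → Bool) ℂ) :
    ∑ p : Fin m → Fin 4, ‖pauliCoeff A p‖ ^ 2 = ((2:ℝ)^m)⁻¹ * frobSq A := by
  have hcoeff : ∀ p, pauliCoeff A p = ((2:ℂ)^m)⁻¹ *
      ∑ x : Fin m → Bool, ∑ y : Fin m → Bool, pauliTensor p x y * A y x := by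
    intro p
    rw [pauliCoeff]
    simp [Matrix.trace, Matrix.mul_apply, Matrix.diag, Finset.mul_sum]
  have hC : ∑ p : Fin m → Fin 4, pauliCoeff A p * (starRingEnd ℂ) (pauliCoeff A p)
      = ((2:ℂ)^m)⁻¹ *
        ∑ x : Fin m → Bool, ∑ y : Fin m → Bool, A y x * (starRingEnd ℂ) (A y x) := by
    have h2 : ((2:ℂ)^m) ≠ 0 := by positivity
    have hconj : (starRingEnd ℂ) (((2:ℂ)^m)⁻¹) = ((2:ℂ)^m)⁻¹ := by
      rw [map_inv₀, map_pow, Complex.conj_ofNat]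
    simp_rw [hcoeff, map_mul, hconj, map_sum, map_mul]
    have step1 : ∀ (c : ℂ) (S T : (Fin m → Fin 4) → ℂ),
        ∑ p, (c * S p) * (c * T p) = c * c * ∑ p, S p * T p := by
      intro c S T
      rw [Finset.mul_sum]
      exact Finset.sum_congr rfl fun p _ => by ring
    rw [step1]
    have inner : ∑ p : Fin m → Fin 4,
        (∑ x, ∑ y, pauliTensor p x y * A y x) *
          (∑ x, ∑ y, (starRingEnd ℂ) (pauliTensor p x y) * (starRingEnd ℂ) (A y x))
        = (2:ℂ)^m * ∑ x, ∑ y, A y x * (starRingEnd ℂ) (A y x) := by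
      have expand : ∀ p : Fin m → Fin 4,
          (∑ x, ∑ y, pauliTensor p x y * A y x) *
            (∑ x, ∑ y, (starRingEnd ℂ) (pauliTensor p x y) * (starRingEnd ℂ) (A y x))
          = ∑ u : (Fin m → Bool) × (Fin m → Bool), ∑ v : (Fin m → Bool) × (Fin m → Bool),
              (A u.2 u.1 * (starRingEnd ℂ) (A v.2 v.1)) *
                (pauliTensor p u.1 u.2 * (starRingEnd ℂ) (pauliTensor p v.1 v.2)) := by
        intro p
        rw [show (∑ x, ∑ y, pauliTensor p x y * A y x)
            = ∑ u : (Fin m → Bool) × (Fin m → Bool), pauliTensor p u.1 u.2 * A u.2 u.1 from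
          (Fintype.sum_prod_type (fun u : (Fin m → Bool) × (Fin m → Bool) =>
            pauliTensor p u.1 u.2 * A u.2 u.1)).symm]
        rw [show (∑ x, ∑ y, (starRingEnd ℂ) (pauliTensor p x y) * (starRingEnd ℂ) (A y x))
            = ∑ v : (Fin m → Bool) × (Fin m → Bool),
                (starRingEnd ℂ) (pauliTensor p v.1 v.2) * (starRingEnd ℂ) (A v.2 v.1) from
          (Fintype.sum_prod_type (fun v : (Fin m → Bool) × (Fin m → Bool) =>
            (starRingEnd ℂ) (pauliTensor p v.1 v.2) * (starRingEnd ℂ) (A v.2 v.1))).symm]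
        rw [Finset.sum_mul_sum]
        exact Finset.sum_congr rfl fun u _ => Finset.sum_congr rfl fun v _ => by ring
      simp_rw [expand]
      rw [Finset.sum_comm]
      have swap2 : ∀ u : (Fin m → Bool) × (Fin m → Bool), ∑ p : Fin m → Fin 4,
            ∑ v : (Fin m → Bool) × (Fin m → Bool),
            (A u.2 u.1 * (starRingEnd ℂ) (A v.2 v.1)) *
              (pauliTensor p u.1 u.2 * (starRingEnd ℂ) (pauliTensor p v.1 v.2))
          = A u.2 u.1 * (starRingEnd ℂ) (A u.2 u.1) * (2:ℂ)^m := by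
        intro u
        rw [Finset.sum_comm]
        have : ∀ v : (Fin m → Bool) × (Fin m → Bool),
            ∑ p : Fin m → Fin 4,
              (A u.2 u.1 * (starRingEnd ℂ) (A v.2 v.1)) *
                (pauliTensor p u.1 u.2 * (starRingEnd ℂ) (pauliTensor p v.1 v.2))
            = (A u.2 u.1 * (starRingEnd ℂ) (A v.2 v.1)) *
                (if u.1 = v.1 ∧ u.2 = v.2 then (2:ℂ)^m else 0) := by
          intro v
          rw [← Finset.mul_sum, pauli_orth']
        simp_rw [this, ← Prod.ext_iff, mul_ite, mul_zero]
        rw [Finset.sum_ite_eq Finset.univ u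
          (fun v => A u.2 u.1 * (starRingEnd ℂ) (A v.2 v.1) * (2:ℂ)^m)]
        simp
      simp_rw [swap2]
      rw [show (∑ x, ∑ y, A y x * (starRingEnd ℂ) (A y x))
            = ∑ u : (Fin m → Bool) × (Fin m → Bool), A u.2 u.1 * (starRingEnd ℂ) (A u.2 u.1) from
          (Fintype.sum_prod_type (fun u : (Fin m → Bool) × (Fin m → Bool) =>
            A u.2 u.1 * (starRingEnd ℂ) (A u.2 u.1))).symm, Finset.mul_sum]
      exact Finset.sum_congr rfl fun u _ => by ring
    rw [inner]
    have h2 : ((2:ℂ)^m) ≠ 0 := by positivity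
    field_simp
  have lhs : ∑ p : Fin m → Fin 4, ‖pauliCoeff A p‖ ^ 2
      = (∑ p : Fin m → Fin 4, pauliCoeff A p * (starRingEnd ℂ) (pauliCoeff A p)).re := by
    rw [Complex.re_sum]
    exact Finset.sum_congr rfl fun p _ => by
      rw [Complex.mul_conj, Complex.ofReal_re, Complex.sq_norm]
  rw [lhs, hC]
  have : ∑ x : Fin m → Bool, ∑ y : Fin m → Bool, A y x * (starRingEnd ℂ) (A y x)
      = ((frobSq A : ℝ) : ℂ) := by
    have habs : ∀ (z:ℂ), z * (starRingEnd ℂ) z = ((‖z‖ ^ 2 : ℝ) : ℂ) := fun z => by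
      rw [Complex.mul_conj, Complex.sq_norm]
    simp_rw [habs, frobSq]
    norm_cast
    exact Finset.sum_comm
  rw [this, show ((2:ℂ)^m)⁻¹ = (((((2:ℝ)^m)⁻¹ : ℝ)) : ℂ) by push_cast; ring,
    ← Complex.ofReal_mul, Complex.ofReal_re]

private lemma snoc_eq_iff' {m : ℕ} {b : Bool} {z z' : Fin m → Bool} :
    (Fin.snoc z b : Fin (m+1) → Bool) = Fin.snoc z' b ↔ z = z' := by
  constructor
  · intro h
    funext i
    have := congrFun h i.castSucc
    simpa using this
  · rintro rfl; rfl

set_option maxHeartbeats 1000000 in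
private lemma choiU_apply' {m : ℕ} (U : Matrix (Fin (m+1) → Bool) (Fin (m+1) → Bool) ℂ)
    (w w' : Fin (m+1+1) → Bool) :
    choiU U w w' = ∑ z : Fin m → Bool,
      U (Fin.snoc z (w (Fin.last (m+1)))) (fun i => w i.castSucc) *
        (starRingEnd ℂ) (U (Fin.snoc z (w' (Fin.last (m+1)))) (fun i => w' i.castSucc)) := by
  unfold choiU choiOfChannel chanU
  simp only [chanLast, Matrix.of_apply]
  refine Finset.sum_congr rfl fun z _ => ?_
  rw [Matrix.mul_apply]
  simp only [Matrix.mul_apply, Matrix.conjTranspose_apply, Matrix.single,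
    Matrix.of_apply, ite_and, mul_ite, mul_zero, mul_one, ite_mul, zero_mul,
    Finset.sum_ite_eq, Finset.mem_univ, if_true]
  rfl

set_option maxHeartbeats 1600000 in
private lemma cross_sum' {m : ℕ} (D W : Matrix (Fin (m+1) → Bool) (Fin (m+1) → Bool) ℂ)
    (hW : ∀ r r', ∑ x, W r x * (starRingEnd ℂ) (W r' x) = if r = r' then 1 else 0)
    (b b' : Bool) :
    ∑ x : Fin (m+1) → Bool, ∑ x' : Fin (m+1) → Bool,
      ‖∑ z : Fin m → Bool,
        D (Fin.snoc z b) x * (starRingEnd ℂ) (W (Fin.snoc z b') x')‖ ^ 2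
      = ∑ z : Fin m → Bool, ∑ x, ‖D (Fin.snoc z b) x‖ ^ 2 := by
  have habs : ∀ (z:ℂ), (‖z‖ ^ 2 : ℝ) = (z * (starRingEnd ℂ) z).re := fun z => by
    rw [Complex.mul_conj, Complex.ofReal_re, Complex.sq_norm]
  simp_rw [habs, ← Complex.re_sum]
  congr 1
  calc ∑ x : Fin (m+1) → Bool, ∑ x' : Fin (m+1) → Bool,
        (∑ z : Fin m → Bool, D (Fin.snoc z b) x * (starRingEnd ℂ) (W (Fin.snoc z b') x')) *
          (starRingEnd ℂ) (∑ z : Fin m → Bool,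
            D (Fin.snoc z b) x * (starRingEnd ℂ) (W (Fin.snoc z b') x'))
      = ∑ x : Fin (m+1) → Bool, ∑ x' : Fin (m+1) → Bool, ∑ z : Fin m → Bool, ∑ z' : Fin m → Bool,
          (D (Fin.snoc z b) x * (starRingEnd ℂ) (D (Fin.snoc z' b) x)) *
            (W (Fin.snoc z' b') x' * (starRingEnd ℂ) (W (Fin.snoc z b') x')) := by
        refine Finset.sum_congr rfl fun x _ => Finset.sum_congr rfl fun x' _ => ?_
        rw [map_sum, Finset.sum_mul_sum]
        refine Finset.sum_congr rfl fun z _ => Finset.sum_congr rfl fun z' _ => ?_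
        simp only [map_mul, Complex.conj_conj]
        ring
    _ = ∑ z : Fin m → Bool, ∑ z' : Fin m → Bool,
          (∑ x, D (Fin.snoc z b) x * (starRingEnd ℂ) (D (Fin.snoc z' b) x)) *
            (∑ x', W (Fin.snoc z' b') x' * (starRingEnd ℂ) (W (Fin.snoc z b') x')) := by
        rw [sum_swap4']
        refine Finset.sum_congr rfl fun z _ => Finset.sum_congr rfl fun z' _ => ?_
        rw [Finset.sum_mul_sum]
    _ = ∑ z : Fin m → Bool, ∑ x, D (Fin.snoc z b) x * (starRingEnd ℂ) (D (Fin.snoc z b) x) := by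
        simp_rw [hW, snoc_eq_iff']
        refine Finset.sum_congr rfl fun z _ => ?_
        simp only [mul_ite, mul_one, mul_zero]
        rw [Finset.sum_ite_eq' Finset.univ z
          (fun z' => ∑ x, D (Fin.snoc z b) x * (starRingEnd ℂ) (D (Fin.snoc z' b) x))]
        simp

private def snocEquiv' (m : ℕ) : (Fin m → Bool) × Bool ≃ (Fin (m+1) → Bool) where
  toFun zb := Fin.snoc zb.1 zb.2
  invFun w := (fun i => w i.castSucc, w (Fin.last m))
  left_inv := by rintro ⟨z, c⟩; simp
  right_inv := fun w => Fin.snoc_init_self w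

private lemma sum_snoc' {m : ℕ} {M : Type*} [AddCommMonoid M] (f : (Fin (m+1) → Bool) → M) :
    ∑ w : Fin (m+1) → Bool, f w = ∑ c : Bool, ∑ x : Fin m → Bool, f (Fin.snoc x c) := by
  rw [← Fintype.sum_equiv (snocEquiv' m) (fun p => f (snocEquiv' m p)) f (fun p => rfl),
    Fintype.sum_prod_type, Finset.sum_comm]
  rfl

private lemma rowOrth' {α : Type*} [Fintype α] [DecidableEq α]
    {U : Matrix α α ℂ} (hU : IsUnitaryM U) (r r' : α) :
    ∑ x, U r x * (starRingEnd ℂ) (U r' x) = if r = r' then 1 else 0 := by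
  have h := congrFun (congrFun hU.1 r) r'
  simpa [Matrix.mul_apply, Matrix.conjTranspose_apply, Matrix.one_apply] using h

private lemma final_sum' {γ : Type*} [Fintype γ]
    (fA fB : Bool → γ → Bool → γ → ℝ) (G : Bool → ℝ)
    (hA : ∀ b b', (∑ x : γ, ∑ x' : γ, fA b x b' x') = G b)
    (hB : ∀ b b', (∑ x : γ, ∑ x' : γ, fB b x b' x') = G b') :
    (∑ b : Bool, ∑ x : γ, ∑ b' : Bool, ∑ x' : γ, (2 * fA b x b' x' + 2 * fB b x b' x'))
      = 8 * (G false + G true) := by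
  have inner : ∀ b b' : Bool, (∑ x : γ, ∑ x' : γ, (2 * fA b x b' x' + 2 * fB b x b' x'))
      = 2 * G b + 2 * G b' := by
    intro b b'
    simp_rw [Finset.sum_add_distrib, ← Finset.mul_sum]
    rw [hA, hB]
  have outer : ∀ b : Bool, (∑ x : γ, ∑ b' : Bool, ∑ x' : γ, (2 * fA b x b' x' + 2 * fB b x b' x'))
      = ∑ b' : Bool, (2 * G b + 2 * G b') := by
    intro b
    rw [Finset.sum_comm]
    exact Finset.sum_congr rfl fun b' _ => inner b b'
  simp_rw [outer]
  simp only [Fintype.sum_bool]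
  ring

set_option maxHeartbeats 1600000 in
private lemma choi_frob_bound' {m : ℕ} (U V : Matrix (Fin (m+1) → Bool) (Fin (m+1) → Bool) ℂ)
    (hU : IsUnitaryM U) (hV : IsUnitaryM V) :
    frobSq (choiU U - choiU V) ≤ 8 * frobSq (U - V) := by
  set D : Matrix (Fin (m+1) → Bool) (Fin (m+1) → Bool) ℂ := U - V with hD
  have hdecomp : ∀ (x x' : Fin (m+1) → Bool) (b b' : Bool),
      (choiU U - choiU V) (Fin.snoc x b) (Fin.snoc x' b')
        = (∑ z : Fin m → Bool, D (Fin.snoc z b) x * (starRingEnd ℂ) (U (Fin.snoc z b') x'))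
          + ∑ z : Fin m → Bool, V (Fin.snoc z b) x * (starRingEnd ℂ) (D (Fin.snoc z b') x') := by
    intro x x' b b'
    rw [Matrix.sub_apply, choiU_apply', choiU_apply', ← Finset.sum_add_distrib,
      ← Finset.sum_sub_distrib]
    refine Finset.sum_congr rfl fun z _ => ?_
    simp only [Fin.snoc_last, Fin.snoc_castSucc]
    simp only [hD, Matrix.sub_apply, map_sub]
    ring
  have hcrossA : ∀ b b' : Bool,
      ∑ x : Fin (m+1) → Bool, ∑ x' : Fin (m+1) → Bool,
        ‖∑ z : Fin m → Bool,
          D (Fin.snoc z b) x * (starRingEnd ℂ) (U (Fin.snoc z b') x')‖ ^ 2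
      = ∑ z : Fin m → Bool, ∑ x, ‖D (Fin.snoc z b) x‖ ^ 2 :=
    fun b b' => cross_sum' D U (rowOrth' hU) b b'
  have hcrossB : ∀ b b' : Bool,
      ∑ x : Fin (m+1) → Bool, ∑ x' : Fin (m+1) → Bool,
        ‖∑ z : Fin m → Bool,
          V (Fin.snoc z b) x * (starRingEnd ℂ) (D (Fin.snoc z b') x')‖ ^ 2
      = ∑ z : Fin m → Bool, ∑ x', ‖D (Fin.snoc z b') x'‖ ^ 2 := by
    intro b b'
    have flip : ∀ (x x' : Fin (m+1) → Bool),
        ‖∑ z : Fin m → Bool,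
          V (Fin.snoc z b) x * (starRingEnd ℂ) (D (Fin.snoc z b') x')‖
        = ‖∑ z : Fin m → Bool,
          D (Fin.snoc z b') x' * (starRingEnd ℂ) (V (Fin.snoc z b) x)‖ := by
      intro x x'
      rw [← Complex.norm_conj, map_sum]
      simp_rw [map_mul, Complex.conj_conj, mul_comm]
    simp_rw [flip]
    rw [Finset.sum_comm]
    exact cross_sum' D V (rowOrth' hV) b' b
  have hfrobD : ∑ b : Bool, ∑ z : Fin m → Bool, ∑ x, ‖D (Fin.snoc z b) x‖ ^ 2
      = frobSq D := by
    rw [frobSq, sum_snoc' (fun r => ∑ x, ‖D r x‖ ^ 2)]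
  rw [frobSq, sum_snoc' (fun w => ∑ w', ‖(choiU U - choiU V) w w'‖ ^ 2)]
  have expand2 : ∀ (x : Fin (m+1) → Bool) (b : Bool),
      ∑ w', ‖(choiU U - choiU V) (Fin.snoc x b) w'‖ ^ 2
        = ∑ b' : Bool, ∑ x', ‖(choiU U - choiU V) (Fin.snoc x b) (Fin.snoc x' b')‖ ^ 2 :=
    fun x b => sum_snoc' _
  simp_rw [expand2]
  have hterm : ∀ (x x' : Fin (m+1) → Bool) (b b' : Bool),
      ‖(choiU U - choiU V) (Fin.snoc x b) (Fin.snoc x' b')‖ ^ 2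
      ≤ 2 * ‖∑ z : Fin m → Bool,
            D (Fin.snoc z b) x * (starRingEnd ℂ) (U (Fin.snoc z b') x')‖ ^ 2
        + 2 * ‖∑ z : Fin m → Bool,
            V (Fin.snoc z b) x * (starRingEnd ℂ) (D (Fin.snoc z b') x')‖ ^ 2 := by
    intro x x' b b'
    rw [hdecomp]
    have htri := norm_add_le
      (∑ z : Fin m → Bool, D (Fin.snoc z b) x * (starRingEnd ℂ) (U (Fin.snoc z b') x'))
      (∑ z : Fin m → Bool, V (Fin.snoc z b) x * (starRingEnd ℂ) (D (Fin.snoc z b') x'))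
    have h1 := norm_nonneg
      (∑ z : Fin m → Bool, D (Fin.snoc z b) x * (starRingEnd ℂ) (U (Fin.snoc z b') x'))
    have h2 := norm_nonneg
      (∑ z : Fin m → Bool, V (Fin.snoc z b) x * (starRingEnd ℂ) (D (Fin.snoc z b') x'))
    have h3 := norm_nonneg
      ((∑ z : Fin m → Bool, D (Fin.snoc z b) x * (starRingEnd ℂ) (U (Fin.snoc z b') x'))
        + ∑ z : Fin m → Bool, V (Fin.snoc z b) x * (starRingEnd ℂ) (D (Fin.snoc z b') x'))
    nlinarith [htri, h1, h2, h3, mul_self_le_mul_self h3 htri,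
      sq_nonneg (‖∑ z : Fin m → Bool,
          D (Fin.snoc z b) x * (starRingEnd ℂ) (U (Fin.snoc z b') x')‖
        - ‖∑ z : Fin m → Bool,
          V (Fin.snoc z b) x * (starRingEnd ℂ) (D (Fin.snoc z b') x')‖)]
  calc ∑ b : Bool, ∑ x : Fin (m+1) → Bool, ∑ b' : Bool, ∑ x' : Fin (m+1) → Bool,
        ‖(choiU U - choiU V) (Fin.snoc x b) (Fin.snoc x' b')‖ ^ 2
      ≤ ∑ b : Bool, ∑ x : Fin (m+1) → Bool, ∑ b' : Bool, ∑ x' : Fin (m+1) → Bool,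
          (2 * ‖∑ z : Fin m → Bool,
              D (Fin.snoc z b) x * (starRingEnd ℂ) (U (Fin.snoc z b') x')‖ ^ 2
            + 2 * ‖∑ z : Fin m → Bool,
              V (Fin.snoc z b) x * (starRingEnd ℂ) (D (Fin.snoc z b') x')‖ ^ 2) := by
        refine Finset.sum_le_sum fun b _ => Finset.sum_le_sum fun x _ =>
          Finset.sum_le_sum fun b' _ => Finset.sum_le_sum fun x' _ => hterm x x' b b'
    _ = 8 * ((fun c : Bool => ∑ z : Fin m → Bool, ∑ x,
            ‖D (Fin.snoc z c) x‖ ^ 2) false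
          + (fun c : Bool => ∑ z : Fin m → Bool, ∑ x,
            ‖D (Fin.snoc z c) x‖ ^ 2) true) :=
        final_sum' _ _ _ (fun b b' => hcrossA b b') (fun b b' => hcrossB b b')
    _ = 8 * frobSq D := by
        rw [← hfrobD, Fintype.sum_bool]
        ring

private lemma pauliCoeff_add' {m : ℕ} (A B : Matrix (Fin m → Bool) (Fin m → Bool) ℂ)
    (p : Fin m → Fin 4) :
    pauliCoeff (A + B) p = pauliCoeff A p + pauliCoeff B p := by
  simp [pauliCoeff, Matrix.mul_add, Matrix.trace_add, mul_add]

/-- If two unitaries are `δ`-close in normalized Frobenius norm and the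
Choi representation of the second has Pauli weight at most `ε²` above degree `k`, then the
first has weight at most `(ε + 4√2·δ)²` above degree `k`. -/

theorem weight_from_close_unitary (n : ℕ)
    (U V : Matrix (Fin n → Bool) (Fin n → Bool) ℂ)
    (hU : IsUnitaryM U) (hV : IsUnitaryM V)
    (k : ℕ) (δ ε : ℝ) (hδ : 0 ≤ δ) (hε : 0 ≤ ε)
    (hclose : ((2 : ℝ) ^ n)⁻¹ * frobSq (U - V) ≤ δ ^ 2)
    (hweight : weightAbove k (choiU V) ≤ ε ^ 2) :
    weightAbove k (choiU U) ≤ (ε + 4 * Real.sqrt 2 * δ) ^ 2 := by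
  cases n with
  | zero =>
      have h0 : choiU U = 0 := by
        funext w w'
        simp [choiU, choiOfChannel, chanU, chanLast]
      have hz : weightAbove k (choiU U) = 0 := by
        rw [h0]
        simp [weightAbove, pauliCoeff, Matrix.mul_zero]
      rw [hz]
      positivity
  | succ m =>
      set B := choiU V with hB
      set E := choiU U - choiU V with hE
      have hBE : choiU U = B + E := by rw [hB, hE]; abel
      have hcoeffsum : ∀ p : Fin (m + 1 + 1) → Fin 4,
          pauliCoeff (choiU U) p = pauliCoeff B p + pauliCoeff E p := by
        intro p
        rw [hBE, pauliCoeff_add']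
      set S : Finset (Fin (m + 1 + 1) → Fin 4) :=
        Finset.univ.filter (fun p => k < pauliDeg p) with hS
      have hWU : weightAbove k (choiU U)
          = ∑ p ∈ S, ‖pauliCoeff (choiU U) p‖ ^ 2 := by
        rw [weightAbove, hS, Finset.sum_filter]
      have hWV : weightAbove k B
          = ∑ p ∈ S, ‖pauliCoeff B p‖ ^ 2 := by
        rw [weightAbove, hS, Finset.sum_filter]
      have hWE : weightAbove k E
          = ∑ p ∈ S, ‖pauliCoeff E p‖ ^ 2 := by
        rw [weightAbove, hS, Finset.sum_filter]
      set a : ℝ := ∑ p ∈ S, ‖pauliCoeff B p‖ ^ 2 with ha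
      set bb : ℝ := ∑ p ∈ S, ‖pauliCoeff E p‖ ^ 2 with hbb
      set c : ℝ := ∑ p ∈ S, ‖pauliCoeff B p‖ * ‖pauliCoeff E p‖ with hc
      have ha0 : 0 ≤ a := Finset.sum_nonneg fun p _ => sq_nonneg _
      have hbb0 : 0 ≤ bb := Finset.sum_nonneg fun p _ => sq_nonneg _
      have hc0 : 0 ≤ c := Finset.sum_nonneg fun p _ =>
        mul_nonneg (norm_nonneg _) (norm_nonneg _)
      have hCS : c ^ 2 ≤ a * bb := by
        rw [hc, ha, hbb]
        exact Finset.sum_mul_sq_le_sq_mul_sq S _ _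
      have haε : a ≤ ε ^ 2 := hWV ▸ hweight
      -- bound bb via Parseval and Frobenius bound
      have hbbδ : bb ≤ 4 * δ ^ 2 := by
        have h1 : bb ≤ ∑ p : Fin (m + 1 + 1) → Fin 4, ‖pauliCoeff E p‖ ^ 2 := by
          rw [hbb]
          exact Finset.sum_le_sum_of_subset_of_nonneg (Finset.filter_subset _ _)
            (fun p _ _ => sq_nonneg _)
        have h2 := parseval' E
        have h3 : frobSq E ≤ 8 * frobSq (U - V) := choi_frob_bound' U V hU hV
        have h4 : ((2:ℝ) ^ (m + 1 + 1))⁻¹ * frobSq E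
            ≤ ((2:ℝ) ^ (m + 1 + 1))⁻¹ * (8 * frobSq (U - V)) := by
          apply mul_le_mul_of_nonneg_left h3
          positivity
        have h5 : ((2:ℝ) ^ (m + 1 + 1))⁻¹ * (8 * frobSq (U - V))
            = 4 * (((2:ℝ) ^ (m + 1))⁻¹ * frobSq (U - V)) := by
          rw [pow_succ]
          field_simp
          ring
        have h6 : 4 * (((2:ℝ) ^ (m + 1))⁻¹ * frobSq (U - V)) ≤ 4 * δ ^ 2 := by
          have := hclose
          linarith
        calc bb ≤ ((2:ℝ) ^ (m + 1 + 1))⁻¹ * frobSq E := by rw [← h2]; exact h1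
          _ ≤ ((2:ℝ) ^ (m + 1 + 1))⁻¹ * (8 * frobSq (U - V)) := h4
          _ = 4 * (((2:ℝ) ^ (m + 1))⁻¹ * frobSq (U - V)) := h5
          _ ≤ 4 * δ ^ 2 := h6
      -- triangle inequality
      have htriangle : weightAbove k (choiU U) ≤ a + 2 * c + bb := by
        rw [hWU]
        have hpt : ∀ p ∈ S, ‖pauliCoeff (choiU U) p‖ ^ 2
            ≤ (‖pauliCoeff B p‖ + ‖pauliCoeff E p‖) ^ 2 := by
          intro p _
          have h := norm_add_le (pauliCoeff B p) (pauliCoeff E p)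
          rw [← hcoeffsum p] at h
          have h0 := norm_nonneg (pauliCoeff (choiU U) p)
          nlinarith [h, h0]
        calc ∑ p ∈ S, ‖pauliCoeff (choiU U) p‖ ^ 2
            ≤ ∑ p ∈ S, (‖pauliCoeff B p‖ + ‖pauliCoeff E p‖) ^ 2 :=
              Finset.sum_le_sum hpt
          _ = a + 2 * c + bb := by
              rw [ha, hbb, hc, Finset.mul_sum]
              rw [← Finset.sum_add_distrib, ← Finset.sum_add_distrib]
              exact Finset.sum_congr rfl fun p _ => by ring
      -- conclude
      have hs2 : Real.sqrt 2 ^ 2 = 2 := Real.sq_sqrt (by norm_num)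
      have hs0 : 0 ≤ Real.sqrt 2 := Real.sqrt_nonneg 2
      have hεδ : 0 ≤ ε * δ := mul_nonneg hε hδ
      have hab : a * bb ≤ ε ^ 2 * (4 * δ ^ 2) :=
        mul_le_mul haε hbbδ hbb0 (sq_nonneg ε)
      have hcbound : c ≤ 2 * (ε * δ) := by
        nlinarith [hCS, hab, hc0, hεδ]
      nlinarith [htriangle, haε, hbbδ, hcbound, hεδ, hs2, hs0, hδ, hε,
        mul_nonneg (mul_nonneg hs0 hε) hδ, sq_nonneg (Real.sqrt 2 - 1),
        mul_nonneg (sub_nonneg.2 (show (1:ℝ) ≤ Real.sqrt 2 by nlinarith [hs2, hs0])) hεδ]
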